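/- Let z, w : ℝ → ℂ be smooth with (z(t), w(t)) ≠ (0,0) for all t, and let (γ, V) be the associated frame-Hopf framed curve. Then γ and V are both 2-periodic (i.e. (γ,V) is a smoothly closed framed curve) if and only if there exists ε ∈ {1, −1} such that (z(t+2), w(t+2)) = ε·(z(t), w(t)) for all t, and moreover ∫₀² (|z(t)|² − |w(t)|²) dt = 0 and ∫₀² z(t)·conj(w(t)) dt = 0 (i.e. z and w are L²-equinorm and L²-orthogonal on [0,2]). -/

import Mathlib

open scoped ComplexConjugate

noncomputable section

/-- The base curve `γ` of the frame-Hopf framed curve associated to a pair of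
complex-valued paths `(z, w)`, in complex coordinates. -/
def baseCurve (z w : ℝ → ℂ) (t : ℝ) : EuclideanSpace ℝ (Fin 3) :=
  WithLp.toLp 2 ![∫ s in (0:ℝ)..t, (‖z s‖ ^ 2 - ‖w s‖ ^ 2),
    ∫ s in (0:ℝ)..t, 2 * (z s * conj (w s)).im,
    ∫ s in (0:ℝ)..t, 2 * (z s * conj (w s)).re]

/-- The framing `V` of the frame-Hopf framed curve associated to `(z, w)`:
`V = (|z|² + |w|²)⁻¹·(2·Im(z·w), Re(z² + w²), Im(−z² + w²))`. -/
def frameField (z w : ℝ → ℂ) (t : ℝ) : EuclideanSpace ℝ (Fin 3) :=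
  (‖z t‖ ^ 2 + ‖w t‖ ^ 2)⁻¹ •
    (WithLp.toLp 2 ![2 * (z t * w t).im, ((z t) ^ 2 + (w t) ^ 2).re, (-(z t) ^ 2 + (w t) ^ 2).im] :
      EuclideanSpace ℝ (Fin 3))

lemma mu_eq_one (z w μ : ℂ) (hne : ¬(z = 0 ∧ w = 0)) (hμ : Complex.normSq μ = 1)
    (h1 : (μ * (z * w)).im = (z * w).im)
    (h2 : (μ * (z ^ 2 + w ^ 2)).re = (z ^ 2 + w ^ 2).re)
    (h3 : (μ * (w ^ 2 - z ^ 2)).im = (w ^ 2 - z ^ 2).im) : μ = 1 := by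
  by_contra hμ1
  set u1 := z * w with hu1
  set u2 := z ^ 2 + w ^ 2 with hu2
  set u3 := w ^ 2 - z ^ 2 with hu3
  set p := μ.re with hp
  set q := μ.im with hq
  have hD : (p - 1) ^ 2 + q ^ 2 ≠ 0 := by
    intro h
    apply hμ1
    have hp1 : p = 1 := by nlinarith [sq_nonneg (p-1), sq_nonneg q]
    have hq0 : q = 0 := by nlinarith [sq_nonneg (p-1), sq_nonneg q]
    apply Complex.ext
    · rw [Complex.one_re, ← hp]; exact hp1
    · rw [Complex.one_im, ← hq]; exact hq0
  set D := (p - 1) ^ 2 + q ^ 2 with hDdef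
  have E1 : (p - 1) * u1.im + q * u1.re = 0 := by
    rw [Complex.mul_im] at h1; rw [hp, hq]; linarith
  have E2 : (p - 1) * u2.re - q * u2.im = 0 := by
    rw [Complex.mul_re] at h2; rw [hp, hq]; linarith
  have E3 : (p - 1) * u3.im + q * u3.re = 0 := by
    rw [Complex.mul_im] at h3; rw [hp, hq]; linarith
  set ζ : ℂ := conj μ - 1 with hζ
  have hζre : ζ.re = p - 1 := by simp [hζ, hp]
  have hζim : ζ.im = -q := by simp [hζ, hq]
  have hζne : ζ ≠ 0 := by
    rw [hζ, sub_ne_zero]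
    intro h
    exact hμ1 (by simpa using congrArg (conj : ℂ → ℂ) h)
  set s1 : ℝ := (-q * u1.im + (p - 1) * u1.re) / D with hs1
  set s2 : ℝ := (q * u2.re + (p - 1) * u2.im) / D with hs2
  set s3 : ℝ := (-q * u3.im + (p - 1) * u3.re) / D with hs3
  have hid : 4 * u1 ^ 2 = u2 ^ 2 - u3 ^ 2 := by rw [hu1, hu2, hu3]; ring
  clear_value u1 u2 u3 p q D ζ s1 s2 s3
  have hre1 : ((s1 : ℂ) * ζ).re = s1 * (p - 1) := by
    rw [Complex.mul_re, Complex.ofReal_re, Complex.ofReal_im, hζre, zero_mul, sub_zero]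
  have him1 : ((s1 : ℂ) * ζ).im = s1 * (-q) := by
    rw [Complex.mul_im, Complex.ofReal_re, Complex.ofReal_im, hζim, zero_mul, add_zero]
  have hre2 : (Complex.I * (s2 : ℂ) * ζ).re = s2 * q := by
    simp [Complex.mul_re, Complex.mul_im, hζre, hζim]
  have him2 : (Complex.I * (s2 : ℂ) * ζ).im = s2 * (p - 1) := by
    simp [Complex.mul_re, Complex.mul_im, hζre, hζim]
  have hre3 : ((s3 : ℂ) * ζ).re = s3 * (p - 1) := by
    rw [Complex.mul_re, Complex.ofReal_re, Complex.ofReal_im, hζre, zero_mul, sub_zero]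
  have him3 : ((s3 : ℂ) * ζ).im = s3 * (-q) := by
    rw [Complex.mul_im, Complex.ofReal_re, Complex.ofReal_im, hζim, zero_mul, add_zero]
  have hu1' : u1 = (s1 : ℂ) * ζ := by
    apply Complex.ext
    · rw [hre1, hs1, div_mul_eq_mul_div, eq_div_iff hD]
      linear_combination q * E1 + u1.re * hDdef
    · rw [him1, hs1, div_mul_eq_mul_div, eq_div_iff hD]
      linear_combination (p - 1) * E1 + u1.im * hDdef
  have hu2' : u2 = Complex.I * (s2 : ℂ) * ζ := by
    apply Complex.ext
    · rw [hre2, hs2, div_mul_eq_mul_div, eq_div_iff hD]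
      linear_combination (p - 1) * E2 + u2.re * hDdef
    · rw [him2, hs2, div_mul_eq_mul_div, eq_div_iff hD]
      linear_combination (-q) * E2 + u2.im * hDdef
  have hu3' : u3 = (s3 : ℂ) * ζ := by
    apply Complex.ext
    · rw [hre3, hs3, div_mul_eq_mul_div, eq_div_iff hD]
      linear_combination q * E3 + u3.re * hDdef
    · rw [him3, hs3, div_mul_eq_mul_div, eq_div_iff hD]
      linear_combination (p - 1) * E3 + u3.im * hDdef
  have hkey : ((4 * s1 ^ 2 + s2 ^ 2 + s3 ^ 2 : ℝ) : ℂ) * ζ ^ 2 = 0 := by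
    rw [hu1', hu2', hu3'] at hid
    push_cast
    linear_combination hid + (s2:ℂ)^2 * ζ^2 * Complex.I_sq
  have hzero : (4 * s1 ^ 2 + s2 ^ 2 + s3 ^ 2 : ℝ) = 0 := by
    rcases mul_eq_zero.1 hkey with h | h
    · exact_mod_cast h
    · exact absurd (sq_eq_zero_iff.1 h) hζne
  obtain ⟨hs20, hs30⟩ : s2 = 0 ∧ s3 = 0 := by
    clear hkey hid hu1' hu2' hu3' hre1 him1 hre2 him2 hre3 him3 hμ h1 h2 h3 E1 E2 E3 hζre hζim hζne hμ1 hne hD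
    constructor <;> nlinarith [sq_nonneg s1, sq_nonneg s2, sq_nonneg s3]
  have hu20 : u2 = 0 := by rw [hu2', hs20]; simp
  have hu30 : u3 = 0 := by rw [hu3', hs30]; simp
  refine hne ⟨?_, ?_⟩
  · have h2z : 2 * z ^ 2 = 0 := by
      have h' : 2 * z ^ 2 = u2 - u3 := by rw [hu2, hu3]; ring
      rw [h', hu20, hu30, sub_zero]
    have := mul_eq_zero.1 h2z
    simpa [pow_eq_zero_iff] using this
  · have h2w : 2 * w ^ 2 = 0 := by
      have h' : 2 * w ^ 2 = u2 + u3 := by rw [hu2, hu3]; ring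
      rw [h', hu20, hu30, add_zero]
    have := mul_eq_zero.1 h2w
    simpa [pow_eq_zero_iff] using this

lemma pointwise_pm (z w z' w' : ℂ) (hne : ¬(z = 0 ∧ w = 0))
    (habsz : ‖z'‖ = ‖z‖) (habsw : ‖w'‖ = ‖w‖)
    (hcross : z' * conj w' = z * conj w)
    (h1 : (z' * w').im = (z * w).im)
    (h2 : (z' ^ 2 + w' ^ 2).re = (z ^ 2 + w ^ 2).re)
    (h3 : (-z' ^ 2 + w' ^ 2).im = (-z ^ 2 + w ^ 2).im) :
    (z' = z ∧ w' = w) ∨ (z' = -z ∧ w' = -w) := by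
  obtain ⟨l, habsl, hz', hw'⟩ : ∃ l : ℂ, ‖l‖ = 1 ∧ z' = l * z ∧ w' = l * w := by
    by_cases hz : z = 0
    · have hw : w ≠ 0 := fun h => hne ⟨hz, h⟩
      have hw'0 : w' ≠ 0 := by
        rw [← norm_ne_zero_iff, habsw, norm_ne_zero_iff]; exact hw
      refine ⟨w' / w, ?_, ?_, ?_⟩
      · rw [norm_div, habsw, div_self (norm_ne_zero_iff.mpr hw)]
      · have hz'0 : z' = 0 := by
          have h0 : ‖z'‖ = 0 := by rw [habsz, hz, norm_zero]
          exact norm_eq_zero.mp h0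
        rw [hz'0, hz, mul_zero]
      · rw [div_mul_cancel₀ _ hw]
    · have hz'0 : z' ≠ 0 := by
        rw [← norm_ne_zero_iff, habsz, norm_ne_zero_iff]; exact hz
      refine ⟨z' / z, ?_, ?_, ?_⟩
      · rw [norm_div, habsz, div_self (norm_ne_zero_iff.mpr hz)]
      · rw [div_mul_cancel₀ _ hz]
      · have hconj : conj z' * w' = conj z * w := by
          have := congrArg (conj : ℂ → ℂ) hcross
          simpa using this
        have hcz : conj z ≠ 0 := by simpa using hz
        have hcz' : conj z' ≠ 0 := by simpa using hz'0
        have hnorm : z' * conj z' = z * conj z := by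
          rw [Complex.mul_conj, Complex.mul_conj]
          norm_cast
          rw [← Complex.sq_norm, ← Complex.sq_norm, habsz]
        have key : z * w' = z' * w := calc
          z * w' = (z * conj z')⁻¹ * (z * conj z') * (z * w') := by
              rw [inv_mul_cancel₀ (by exact mul_ne_zero hz hcz'), one_mul]
          _ = (z * conj z')⁻¹ * (z * z) * (conj z' * w') := by ring
          _ = (z * conj z')⁻¹ * (z * z) * (conj z * w) := by rw [hconj]
          _ = (z * conj z')⁻¹ * (z * conj z) * (z * w) := by ring
          _ = (z * conj z')⁻¹ * (z' * conj z') * (z * w) := by rw [← hnorm, mul_comm z' (conj z')]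
          _ = z' * w := by
              field_simp
        rw [div_mul_eq_mul_div, eq_div_iff hz]
        linear_combination key
  have hl1 : Complex.normSq l = 1 := by
    rw [← Complex.sq_norm, habsl, one_pow]
  have hμ : Complex.normSq (l ^ 2) = 1 := by rw [map_pow, hl1, one_pow]
  have e1 : z' * w' = l ^ 2 * (z * w) := by rw [hz', hw']; ring
  have e2 : z' ^ 2 + w' ^ 2 = l ^ 2 * (z ^ 2 + w ^ 2) := by rw [hz', hw']; ring
  have e3 : -z' ^ 2 + w' ^ 2 = l ^ 2 * (w ^ 2 - z ^ 2) := by rw [hz', hw']; ring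
  have e0 : (-z ^ 2 + w ^ 2 : ℂ) = w ^ 2 - z ^ 2 := by ring
  rw [e1] at h1
  rw [e2] at h2
  rw [e3, e0] at h3
  have hl2 : l ^ 2 = 1 := mu_eq_one z w _ hne hμ h1 h2 h3
  have : (l - 1) * (l + 1) = 0 := by linear_combination hl2
  rcases mul_eq_zero.1 this with h | h
  · left
    have hl : l = 1 := by rwa [sub_eq_zero] at h
    rw [hz', hw', hl, one_mul, one_mul]; exact ⟨rfl, rfl⟩
  · right
    have hl : l = -1 := by rwa [add_eq_zero_iff_eq_neg] at h
    rw [hz', hw', hl]; constructor <;> ring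

lemma periodize (f : ℝ → ℝ) (hf : Continuous f)
    (h : ∀ t : ℝ, (∫ s in (0:ℝ)..(t+2), f s) = ∫ s in (0:ℝ)..t, f s) :
    ∀ t, f (t + 2) = f t := by
  intro t
  have hd : ∀ b : ℝ, HasDerivAt (fun u => ∫ s in (0:ℝ)..u, f s) (f b) b := fun b =>
    intervalIntegral.integral_hasDerivAt_right (hf.intervalIntegrable 0 b)
      (hf.stronglyMeasurable.stronglyMeasurableAtFilter) hf.continuousAt
  have h3 : HasDerivAt (fun u : ℝ => ∫ s in (0:ℝ)..(u+2), f s) (f (t+2) * 1) t :=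
    by have := HasDerivAt.comp t (hd (t+2)) ((hasDerivAt_id t).add_const 2); exact this
  rw [funext h] at h3
  have := h3.unique (hd t)
  linarith

lemma integral_shift (f : ℝ → ℝ) (hf : Continuous f) (hper : ∀ t, f (t + 2) = f t)
    (h0 : (∫ s in (0:ℝ)..2, f s) = 0) :
    ∀ t : ℝ, (∫ s in (0:ℝ)..(t+2), f s) = ∫ s in (0:ℝ)..t, f s := by
  intro t
  have hP : Function.Periodic f 2 := hper
  have hadd : (∫ s in (0:ℝ)..t, f s) + (∫ s in t..(t+2), f s) = ∫ s in (0:ℝ)..(t+2), f s :=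
    intervalIntegral.integral_add_adjacent_intervals (hf.intervalIntegrable 0 t)
      (hf.intervalIntegrable t (t+2))
  have hshift : (∫ s in t..(t+2), f s) = ∫ s in (0:ℝ)..(0+2:ℝ), f s :=
    hP.intervalIntegral_add_eq t 0
  rw [← hadd, hshift]
  norm_num [h0]

lemma sign_rigid (g : ℝ → ℝ) (hg : Continuous g) (hval : ∀ t, g t = 1 ∨ g t = -1) :
    ∀ t, g t = g 0 := by
  have key : ∀ s t : ℝ, g s = 1 → g t = -1 → False := by
    intro s t hs ht
    have h0 : (0:ℝ) ∈ Set.Icc (g t) (g s) := by rw [hs, ht]; norm_num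
    obtain ⟨c, hc⟩ := intermediate_value_univ t s hg h0
    rcases hval c with h | h <;> rw [hc] at h <;> norm_num at h
  intro t
  rcases hval t with h1 | h1 <;> rcases hval 0 with h2 | h2 <;> rw [h1, h2]
  · exact absurd (key t 0 h1 h2) (by simp)
  · exact absurd (key 0 t h2 h1) (by simp)

/-- The frame-Hopf framed curve `(γ, V)` of `(z, w)` is smoothly closed (2-periodic)
if and only if `(z, w)` is closed or anticlosed, and `z` and `w` are `L²`-equinorm
and `L²`-orthogonal on `[0,2]`. -/
theorem framed_curve_closed_iff
    (z w : ℝ → ℂ) (hz : ContDiff ℝ (⊤ : ℕ∞) z) (hw : ContDiff ℝ (⊤ : ℕ∞) w)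
    (hzw : ∀ t, (z t, w t) ≠ (0, 0)) :
    ((∀ t, baseCurve z w (t + 2) = baseCurve z w t) ∧
     (∀ t, frameField z w (t + 2) = frameField z w t)) ↔
    ((∃ ε : ℝ, (ε = 1 ∨ ε = -1) ∧
        ∀ t, z (t + 2) = (ε : ℂ) * z t ∧ w (t + 2) = (ε : ℂ) * w t) ∧
     (∫ t in (0:ℝ)..2, (‖z t‖ ^ 2 - ‖w t‖ ^ 2)) = 0 ∧
     (∫ t in (0:ℝ)..2, z t * conj (w t)) = 0) := by
  have hzc : Continuous z := hz.continuous
  have hwc : Continuous w := hw.continuous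
  have hcross : Continuous fun s => z s * conj (w s) :=
    hzc.mul (Complex.continuous_conj.comp hwc)
  have hc1 : Continuous fun s => ‖z s‖ ^ 2 - ‖w s‖ ^ 2 :=
    ((continuous_norm.comp hzc).pow 2).sub ((continuous_norm.comp hwc).pow 2)
  have hc2 : Continuous fun s => 2 * (z s * conj (w s)).im :=
    continuous_const.mul (Complex.continuous_im.comp hcross)
  have hc3 : Continuous fun s => 2 * (z s * conj (w s)).re :=
    continuous_const.mul (Complex.continuous_re.comp hcross)
  have hne : ∀ t, ¬(z t = 0 ∧ w t = 0) := by
    intro t ⟨h1, h2⟩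
    exact hzw t (by rw [h1, h2])
  have hN : ∀ t, 0 < ‖z t‖ ^ 2 + ‖w t‖ ^ 2 := by
    intro t
    rcases not_and_or.1 (hne t) with h | h
    · have := pow_pos (norm_pos_iff.mpr h) 2
      have := sq_nonneg (‖w t‖)
      linarith
    · have := pow_pos (norm_pos_iff.mpr h) 2
      have := sq_nonneg (‖z t‖)
      linarith
  constructor
  · rintro ⟨H1, H2⟩
    -- the three integral conditions
    have hI1 : (∫ t in (0:ℝ)..2, (‖z t‖ ^ 2 - ‖w t‖ ^ 2)) = 0 := by
      have h := congrArg (fun v => v (0 : Fin 3)) (H1 0)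
      simp only [baseCurve, Matrix.cons_val_zero, Matrix.cons_val_one, Matrix.head_cons,
        Matrix.cons_val_two, Matrix.tail_cons, zero_add, intervalIntegral.integral_same, PiLp.toLp_apply] at h
      exact h
    have hI2 : (∫ t in (0:ℝ)..2, 2 * (z t * conj (w t)).im) = 0 := by
      have h := congrArg (fun v => v (1 : Fin 3)) (H1 0)
      simp only [baseCurve, Matrix.cons_val_zero, Matrix.cons_val_one, Matrix.head_cons,
        Matrix.cons_val_two, Matrix.tail_cons, zero_add, intervalIntegral.integral_same, PiLp.toLp_apply] at h
      exact h
    have hI3 : (∫ t in (0:ℝ)..2, 2 * (z t * conj (w t)).re) = 0 := by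
      have h := congrArg (fun v => v (2 : Fin 3)) (H1 0)
      simp only [baseCurve, Matrix.cons_val_zero, Matrix.cons_val_one, Matrix.head_cons,
        Matrix.cons_val_two, Matrix.tail_cons, zero_add, intervalIntegral.integral_same, PiLp.toLp_apply] at h
      exact h
    have hIc : (∫ t in (0:ℝ)..2, z t * conj (w t)) = 0 := by
      have hint := hcross.intervalIntegrable (μ := MeasureTheory.volume) 0 2
      apply Complex.ext
      · have hre := Complex.reCLM.intervalIntegral_comp_comm hint
        have e : (∫ t in (0:ℝ)..2, z t * conj (w t)).re
            = ∫ t in (0:ℝ)..2, (z t * conj (w t)).re := by simpa using hre.symm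
        have e2 : (∫ t in (0:ℝ)..2, 2 * (z t * conj (w t)).re)
            = 2 * ∫ t in (0:ℝ)..2, (z t * conj (w t)).re :=
          intervalIntegral.integral_const_mul 2 _
        rw [e2] at hI3
        rw [e, Complex.zero_re]; linarith
      · have him := Complex.imCLM.intervalIntegral_comp_comm hint
        have e : (∫ t in (0:ℝ)..2, z t * conj (w t)).im
            = ∫ t in (0:ℝ)..2, (z t * conj (w t)).im := by simpa using him.symm
        have e2 : (∫ t in (0:ℝ)..2, 2 * (z t * conj (w t)).im)
            = 2 * ∫ t in (0:ℝ)..2, (z t * conj (w t)).im :=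
          intervalIntegral.integral_const_mul 2 _
        rw [e2] at hI2
        rw [e, Complex.zero_im]; linarith
    -- pointwise periodicity of the Hopf components
    have P1 : ∀ t, ‖z (t+2)‖ ^ 2 - ‖w (t+2)‖ ^ 2
        = ‖z t‖ ^ 2 - ‖w t‖ ^ 2 :=
      periodize _ hc1 (fun t => by
        have h := congrArg (fun v => v (0 : Fin 3)) (H1 t)
        simpa [baseCurve] using h)
    have P2 : ∀ t, 2 * (z (t+2) * conj (w (t+2))).im = 2 * (z t * conj (w t)).im :=
      periodize _ hc2 (fun t => by
        have h := congrArg (fun v => v (1 : Fin 3)) (H1 t)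
        simpa [baseCurve] using h)
    have P3 : ∀ t, 2 * (z (t+2) * conj (w (t+2))).re = 2 * (z t * conj (w t)).re :=
      periodize _ hc3 (fun t => by
        have h := congrArg (fun v => v (2 : Fin 3)) (H1 t)
        simpa [baseCurve] using h)
    have Pc : ∀ t, z (t+2) * conj (w (t+2)) = z t * conj (w t) := by
      intro t
      apply Complex.ext
      · have := P3 t; linarith
      · have := P2 t; linarith
    -- periodicity of the moduli
    have Pabs : ∀ t, ‖z (t+2)‖ = ‖z t‖
        ∧ ‖w (t+2)‖ = ‖w t‖ := by
      intro t
      have hprod : ‖z (t+2)‖ * ‖w (t+2)‖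
          = ‖z t‖ * ‖w t‖ := by
        have h := congrArg norm (Pc t)
        simpa [norm_mul, Complex.norm_conj] using h
      have hdiff := P1 t
      have ha' := norm_nonneg (z (t+2))
      have hb' := norm_nonneg (w (t+2))
      have ha := norm_nonneg (z t)
      have hb := norm_nonneg (w t)
      have hsumsq : (‖z (t+2)‖ ^ 2 + ‖w (t+2)‖ ^ 2) ^ 2
          = (‖z t‖ ^ 2 + ‖w t‖ ^ 2) ^ 2 := by
        linear_combination ((‖z (t+2)‖ ^ 2 - ‖w (t+2)‖ ^ 2)
            + (‖z t‖ ^ 2 - ‖w t‖ ^ 2)) * hdiff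
          + 4 * (‖z (t+2)‖ * ‖w (t+2)‖
            + ‖z t‖ * ‖w t‖) * hprod
      have hsum : ‖z (t+2)‖ ^ 2 + ‖w (t+2)‖ ^ 2
          = ‖z t‖ ^ 2 + ‖w t‖ ^ 2 := by
        have h1 : (0:ℝ) ≤ ‖z (t+2)‖ ^ 2 + ‖w (t+2)‖ ^ 2 := by positivity
        have h2 : (0:ℝ) ≤ ‖z t‖ ^ 2 + ‖w t‖ ^ 2 := by positivity
        have := congrArg Real.sqrt hsumsq
        rwa [Real.sqrt_sq h1, Real.sqrt_sq h2] at this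
      constructor
      · have hsq : ‖z (t+2)‖ ^ 2 = ‖z t‖ ^ 2 := by linarith
        have := congrArg Real.sqrt hsq
        rwa [Real.sqrt_sq ha', Real.sqrt_sq ha] at this
      · have hsq : ‖w (t+2)‖ ^ 2 = ‖w t‖ ^ 2 := by linarith
        have := congrArg Real.sqrt hsq
        rwa [Real.sqrt_sq hb', Real.sqrt_sq hb] at this
    -- periodicity of the frame components
    have F : ∀ t, (z (t+2) * w (t+2)).im = (z t * w t).im
        ∧ (z (t+2) ^ 2 + w (t+2) ^ 2).re = (z t ^ 2 + w t ^ 2).re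
        ∧ (-z (t+2) ^ 2 + w (t+2) ^ 2).im = (-z t ^ 2 + w t ^ 2).im := by
      intro t
      have hNper : ‖z (t+2)‖ ^ 2 + ‖w (t+2)‖ ^ 2
          = ‖z t‖ ^ 2 + ‖w t‖ ^ 2 := by
        rw [(Pabs t).1, (Pabs t).2]
      have hNne : (‖z t‖ ^ 2 + ‖w t‖ ^ 2)⁻¹ ≠ 0 :=
        inv_ne_zero (hN t).ne'
      have c0 := congrArg (fun v => v (0 : Fin 3)) (H2 t)
      have c1 := congrArg (fun v => v (1 : Fin 3)) (H2 t)
      have c2 := congrArg (fun v => v (2 : Fin 3)) (H2 t)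
      simp only [frameField, PiLp.smul_apply, PiLp.toLp_apply, Matrix.smul_cons, Matrix.smul_empty,
        Matrix.cons_val_zero, Matrix.cons_val_one, Matrix.head_cons,
        Matrix.cons_val_two, Matrix.tail_cons, smul_eq_mul] at c0 c1 c2
      rw [hNper] at c0 c1 c2
      refine ⟨?_, ?_, ?_⟩
      · have := mul_left_cancel₀ hNne c0; linarith
      · exact mul_left_cancel₀ hNne c1
      · exact mul_left_cancel₀ hNne c2
    have dich : ∀ t, (z (t+2) = z t ∧ w (t+2) = w t)
        ∨ (z (t+2) = -z t ∧ w (t+2) = -w t) := fun t =>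
      pointwise_pm (z t) (w t) (z (t+2)) (w (t+2)) (hne t) (Pabs t).1 (Pabs t).2 (Pc t)
        (F t).1 (F t).2.1 (F t).2.2
    -- the sign function
    set g : ℝ → ℝ := fun t => (z (t+2) * conj (z t) + w (t+2) * conj (w t)).re
        / (‖z t‖ ^ 2 + ‖w t‖ ^ 2) with hg
    have hnum : ∀ t, (z t * conj (z t) + w t * conj (w t)).re
        = ‖z t‖ ^ 2 + ‖w t‖ ^ 2 := by
      intro t
      rw [Complex.mul_conj, Complex.mul_conj, ← Complex.ofReal_add, Complex.ofReal_re,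
        Complex.normSq_eq_norm_sq, Complex.normSq_eq_norm_sq]
    have hgval : ∀ t, (z (t+2) = z t ∧ w (t+2) = w t → g t = 1)
        ∧ (z (t+2) = -z t ∧ w (t+2) = -w t → g t = -1) := by
      intro t
      constructor
      · rintro ⟨h1, h2⟩
        rw [hg]
        simp only
        rw [h1, h2, hnum t, div_self (hN t).ne']
      · rintro ⟨h1, h2⟩
        rw [hg]
        simp only
        rw [h1, h2]
        have e : (-z t * conj (z t) + -w t * conj (w t))
            = -(z t * conj (z t) + w t * conj (w t)) := by ring
        rw [e, Complex.neg_re, hnum t, neg_div, div_self (hN t).ne']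
    have hval : ∀ t, g t = 1 ∨ g t = -1 := fun t =>
      (dich t).imp (hgval t).1 (hgval t).2
    have hgc : Continuous g := by
      apply Continuous.div
      · have hz2 : Continuous fun t : ℝ => z (t+2) :=
          hzc.comp (continuous_id.add continuous_const)
        have hw2 : Continuous fun t : ℝ => w (t+2) :=
          hwc.comp (continuous_id.add continuous_const)
        exact Complex.continuous_re.comp
          ((hz2.mul (Complex.continuous_conj.comp hzc)).add
            (hw2.mul (Complex.continuous_conj.comp hwc)))
      · exact ((continuous_norm.comp hzc).pow 2).add
          ((continuous_norm.comp hwc).pow 2)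
      · exact fun t => (hN t).ne'
    have hconst := sign_rigid g hgc hval
    refine ⟨⟨g 0, hval 0, ?_⟩, hI1, hIc⟩
    intro t
    rcases dich t with ⟨h1, h2⟩ | ⟨h1, h2⟩
    · have hg1 : g t = 1 := (hgval t).1 ⟨h1, h2⟩
      have he : g 0 = 1 := by rw [← hconst t, hg1]
      rw [he]
      push_cast
      rw [one_mul, one_mul]
      exact ⟨h1, h2⟩
    · have hg1 : g t = -1 := (hgval t).2 ⟨h1, h2⟩
      have he : g 0 = -1 := by rw [← hconst t, hg1]
      rw [he]
      push_cast
      constructor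
      · rw [h1]; ring
      · rw [h2]; ring
  · rintro ⟨⟨ε, hε, hper⟩, hJ1, hJ2⟩
    have hε2 : (ε:ℂ) * (ε:ℂ) = 1 := by rcases hε with rfl | rfl <;> norm_num
    have habsε : ‖(ε:ℂ)‖ = 1 := by rcases hε with rfl | rfl <;> norm_num
    have hconjε : conj (ε:ℂ) = (ε:ℂ) := Complex.conj_ofReal ε
    have E1 : ∀ t, z (t+2) * w (t+2) = z t * w t := by
      intro t
      rw [(hper t).1, (hper t).2]
      linear_combination z t * w t * hε2
    have E2 : ∀ t, z (t+2) ^ 2 + w (t+2) ^ 2 = z t ^ 2 + w t ^ 2 := by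
      intro t
      rw [(hper t).1, (hper t).2]
      linear_combination (z t ^ 2 + w t ^ 2) * hε2
    have E3 : ∀ t, -z (t+2) ^ 2 + w (t+2) ^ 2 = -z t ^ 2 + w t ^ 2 := by
      intro t
      rw [(hper t).1, (hper t).2]
      linear_combination (-z t ^ 2 + w t ^ 2) * hε2
    have E4 : ∀ t, ‖z (t+2)‖ = ‖z t‖ := by
      intro t; rw [(hper t).1, norm_mul, habsε, one_mul]
    have E5 : ∀ t, ‖w (t+2)‖ = ‖w t‖ := by
      intro t; rw [(hper t).2, norm_mul, habsε, one_mul]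
    have Ec : ∀ t, z (t+2) * conj (w (t+2)) = z t * conj (w t) := by
      intro t
      rw [(hper t).1, (hper t).2, map_mul, hconjε]
      linear_combination z t * conj (w t) * hε2
    have p1 : ∀ t, ‖z (t+2)‖ ^ 2 - ‖w (t+2)‖ ^ 2
        = ‖z t‖ ^ 2 - ‖w t‖ ^ 2 := by
      intro t; rw [E4 t, E5 t]
    have p2 : ∀ t, 2 * (z (t+2) * conj (w (t+2))).im = 2 * (z t * conj (w t)).im := by
      intro t; rw [Ec t]
    have p3 : ∀ t, 2 * (z (t+2) * conj (w (t+2))).re = 2 * (z t * conj (w t)).re := by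
      intro t; rw [Ec t]
    -- integrals of the two cross terms vanish
    have hint := hcross.intervalIntegrable (μ := MeasureTheory.volume) 0 2
    have hJ2re : (∫ t in (0:ℝ)..2, 2 * (z t * conj (w t)).re) = 0 := by
      have hre := Complex.reCLM.intervalIntegral_comp_comm hint
      have e : (∫ t in (0:ℝ)..2, (z t * conj (w t)).re) = 0 := by
        have := hre
        rw [hJ2] at this
        simpa using this
      rw [intervalIntegral.integral_const_mul 2 _, e, mul_zero]
    have hJ2im : (∫ t in (0:ℝ)..2, 2 * (z t * conj (w t)).im) = 0 := by
      have him := Complex.imCLM.intervalIntegral_comp_comm hint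
      have e : (∫ t in (0:ℝ)..2, (z t * conj (w t)).im) = 0 := by
        have := him
        rw [hJ2] at this
        simpa using this
      rw [intervalIntegral.integral_const_mul 2 _, e, mul_zero]
    constructor
    · intro t
      ext i
      fin_cases i
      · simpa [baseCurve] using integral_shift _ hc1 p1 hJ1 t
      · simpa [baseCurve] using integral_shift _ hc2 p2 hJ2im t
      · simpa [baseCurve] using integral_shift _ hc3 p3 hJ2re t
    · intro t
      simp only [frameField]
      rw [E4 t, E5 t, E1 t, E2 t, E3 t]
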